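/- arXiv:1509.07837 — 6 statements merged into one kernel-verified Lean document; each statement's English description precedes it below -/
import Mathlib

section
/- Let C ⊂ S^{n-1} be a spherical 2-design with N points, i.e. Σ_{x∈C} x = 0 and Σ_{x∈C} ⟨x,y⟩² = N/n for every unit vector y. Then for any two distinct points x, z ∈ C, ⟨x,z⟩ ≥ 1 − N/n. -/
open Finset
open scoped RealInnerProductSpace Classical

/-! Project the design onto the unit direction `y` of `x - z`. The two terms of `x` and `z` in
`∑ ⟪w, y⟫²` already add up to `1 - ⟪x, z⟫`, and the remaining terms are nonnegative, so
`1 - ⟪x, z⟫ ≤ N / n`. -/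

section

variable {E : Type*} [NormedAddCommGroup E] [InnerProductSpace ℝ E]

theorem inner_sq_add_inner_sq_normalize_sub {x z : E} (hx : ‖x‖ = 1) (hz : ‖z‖ = 1)
    (hxz : x ≠ z) :
    ⟪x, ‖x - z‖⁻¹ • (x - z)⟫ ^ 2 + ⟪z, ‖x - z‖⁻¹ • (x - z)⟫ ^ 2 = 1 - ⟪x, z⟫ := by
  have hxx : ⟪x, x⟫ = 1 := by rw [real_inner_self_eq_norm_sq, hx, one_pow]
  have hzz : ⟪z, z⟫ = 1 := by rw [real_inner_self_eq_norm_sq, hz, one_pow]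
  have hnorm_sq : ‖x - z‖ ^ 2 = 2 * (1 - ⟪x, z⟫) := by
    rw [norm_sub_sq_real, hx, hz]; ring
  have hgap : 1 - ⟪x, z⟫ ≠ 0 := by
    have := norm_pos_iff.2 (sub_ne_zero.2 hxz)
    nlinarith
  simp only [real_inner_smul_right, inner_sub_right, hxx, hzz, real_inner_comm x z, mul_pow,
    inv_pow, hnorm_sq]
  field_simp
  ring

theorem sq_add_sq_le_sum_sq {ι : Type*} (s : Finset ι) (f : ι → ℝ) {i j : ι} (hi : i ∈ s)
    (hj : j ∈ s) (hij : i ≠ j) : f i ^ 2 + f j ^ 2 ≤ ∑ k ∈ s, f k ^ 2 := by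
  rw [← Finset.sum_pair (f := fun k => f k ^ 2) hij]
  exact Finset.sum_le_sum_of_subset_of_nonneg (Finset.insert_subset hi (by simpa))
    fun k _ _ => sq_nonneg (f k)

end

theorem two_design_inner_lower_bound_general (n N : ℕ)
    (C : Finset (EuclideanSpace ℝ (Fin n)))
    (hunit : ∀ x ∈ C, ‖x‖ = 1)
    (hdeg2 : ∀ y : EuclideanSpace ℝ (Fin n), ‖y‖ = 1 →
      ∑ x ∈ C, (⟪x, y⟫ : ℝ) ^ 2 = (N : ℝ) / n)
    (x z : EuclideanSpace ℝ (Fin n)) (hx : x ∈ C) (hz : z ∈ C) (hxz : x ≠ z) :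
    1 - (N : ℝ) / n ≤ ⟪x, z⟫ := by
  have hy : ‖(‖x - z‖⁻¹ : ℝ) • (x - z)‖ = 1 := norm_smul_inv_norm (sub_ne_zero.2 hxz)
  have hproj := sq_add_sq_le_sum_sq C (fun w => ⟪w, ‖x - z‖⁻¹ • (x - z)⟫) hx hz hxz
  rw [inner_sq_add_inner_sq_normalize_sub (hunit x hx) (hunit z hz) hxz, hdeg2 _ hy] at hproj
  linarith

/-- Lemma 2.2(a): for a spherical 2-design of `N` points on `S^{n-1}`, any two distinct points
`x, z` satisfy `⟪x,z⟫ ≥ 1 − N/n`. -/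
theorem two_design_inner_lower_bound (n N : ℕ) (hn : 1 ≤ n)
    (C : Finset (EuclideanSpace ℝ (Fin n)))
    (hcard : C.card = N) (hunit : ∀ x ∈ C, ‖x‖ = 1)
    (hbal : ∑ x ∈ C, x = 0)
    (hdeg2 : ∀ y : EuclideanSpace ℝ (Fin n), ‖y‖ = 1 →
      ∑ x ∈ C, (⟪x, y⟫ : ℝ) ^ 2 = (N : ℝ) / n)
    (x z : EuclideanSpace ℝ (Fin n)) (hx : x ∈ C) (hz : z ∈ C) (hxz : x ≠ z) :
    1 - (N : ℝ) / n ≤ ⟪x, z⟫ :=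
  two_design_inner_lower_bound_general n N C hunit hdeg2 x z hx hz hxz
end

section
/- Let C ⊂ S^{n-1} be a spherical 2-design with N points, n+1 ≤ N ≤ 2n. Then for any two distinct points x, z ∈ C, ⟨x,z⟩ ≤ (N−2)/n − 1. -/
open Finset
open scoped RealInnerProductSpace Classical

/-!
Put `t = 1 + ⟪x, z⟫` and `v = x + z`, so that `⟪x, v⟫ = ⟪z, v⟫ = t` and `‖v‖² = 2t`. By the design
conditions the other `N - 2` points `w` satisfy `∑ ⟪w, v⟫ = -2t` and `∑ ⟪w, v⟫² = 2tN/n - 2t²`, and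
Cauchy–Schwarz for these `N - 2` numbers gives `4t² ≤ (N - 2)(2tN/n - 2t²)`, i.e. `t ≤ (N - 2)/n`.
-/

section

variable {E : Type*} [NormedAddCommGroup E] [InnerProductSpace ℝ E]

theorem sum_inner_sq_eq_mul_norm_sq {C : Finset E} {μ : ℝ}
    (h : ∀ y : E, ‖y‖ = 1 → ∑ x ∈ C, ⟪x, y⟫ ^ 2 = μ) (v : E) :
    ∑ x ∈ C, ⟪x, v⟫ ^ 2 = μ * ‖v‖ ^ 2 := by
  rcases eq_or_ne v 0 with rfl | hv
  · simp
  have hv' : ‖v‖ ≠ 0 := norm_ne_zero_iff.mpr hv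
  calc ∑ x ∈ C, ⟪x, v⟫ ^ 2 = ‖v‖ ^ 2 * ∑ x ∈ C, ⟪x, ‖v‖⁻¹ • v⟫ ^ 2 := by
        rw [mul_sum]
        refine sum_congr rfl fun x _ => ?_
        rw [real_inner_smul_right]
        field_simp
    _ = μ * ‖v‖ ^ 2 := by
        rw [h _ (by rw [norm_smul, norm_inv, norm_norm, inv_mul_cancel₀ hv']), mul_comm]

variable {C : Finset E} {μ : ℝ} {x z : E}

theorem sq_one_add_inner_mul_card_le (hunit : ∀ x ∈ C, ‖x‖ = 1) (hbal : ∑ x ∈ C, x = 0)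
    (hdeg2 : ∀ v : E, ∑ w ∈ C, ⟪w, v⟫ ^ 2 = μ * ‖v‖ ^ 2) (hx : x ∈ C) (hz : z ∈ C)
    (hxz : x ≠ z) :
    (1 + ⟪x, z⟫) ^ 2 * #C ≤ (1 + ⟪x, z⟫) * ((#C - 2) * μ) := by
  set t := 1 + ⟪x, z⟫
  have hxx : ⟪x, x⟫ = 1 := by rw [real_inner_self_eq_norm_sq, hunit x hx, one_pow]
  have hzz : ⟪z, z⟫ = 1 := by rw [real_inner_self_eq_norm_sq, hunit z hz, one_pow]
  have hxv : ⟪x, x + z⟫ = t := by rw [inner_add_right, hxx]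
  have hzv : ⟪z, x + z⟫ = t := by rw [inner_add_right, hzz, real_inner_comm, add_comm]
  have hv : ‖x + z‖ ^ 2 = 2 * t := by
    rw [← real_inner_self_eq_norm_sq, inner_add_left, hxv, hzv]; ring
  have hzC : z ∈ C.erase x := mem_erase.mpr ⟨hxz.symm, hz⟩
  set D := (C.erase x).erase z
  have hsplit (f : E → ℝ) : ∑ w ∈ C, f w = f x + f z + ∑ w ∈ D, f w := by
    rw [← add_sum_erase _ f hx, ← add_sum_erase _ f hzC, add_assoc]
  have hD : (#D : ℝ) = #C - 2 := by
    have h2 : 2 ≤ #C := one_lt_card.mpr ⟨x, hx, z, hz, hxz⟩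
    rw [card_erase_of_mem hzC, card_erase_of_mem hx, Nat.sub_sub, Nat.cast_sub h2]
    norm_num
  have hsum : ∑ w ∈ D, ⟪w, x + z⟫ = -2 * t := by
    have h := hsplit (⟪·, x + z⟫)
    rw [← sum_inner, hbal, inner_zero_left, hxv, hzv] at h
    linarith
  have hsum_sq : ∑ w ∈ D, ⟪w, x + z⟫ ^ 2 = 2 * μ * t - 2 * t ^ 2 := by
    have h := hsplit (⟪·, x + z⟫ ^ 2)
    rw [hdeg2, hv, hxv, hzv] at h
    linarith
  have hCS := sq_sum_le_card_mul_sum_sq (s := D) (f := (⟪·, x + z⟫))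
  rw [hsum, hsum_sq, hD] at hCS
  linarith

theorem one_add_inner_mul_card_le (hunit : ∀ x ∈ C, ‖x‖ = 1) (hbal : ∑ x ∈ C, x = 0)
    (hdeg2 : ∀ v : E, ∑ w ∈ C, ⟪w, v⟫ ^ 2 = μ * ‖v‖ ^ 2) (hx : x ∈ C) (hz : z ∈ C)
    (hxz : x ≠ z) :
    (1 + ⟪x, z⟫) * #C ≤ (#C - 2) * μ := by
  have ht : 0 ≤ 1 + ⟪x, z⟫ := by
    have h := neg_abs_le ⟪x, z⟫
    have h' := abs_real_inner_le_norm x z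
    rw [hunit x hx, hunit z hz, one_mul] at h'
    linarith
  rcases ht.eq_or_lt with ht | ht
  · have hC : (2 : ℝ) ≤ #C := by exact_mod_cast one_lt_card.mpr ⟨x, hx, z, hz, hxz⟩
    have hμ : 0 ≤ μ := by
      simpa [hunit x hx] using (sum_nonneg fun w _ => sq_nonneg ⟪w, x⟫).trans_eq (hdeg2 x)
    rw [← ht, zero_mul]
    exact mul_nonneg (by linarith) hμ
  · refine le_of_mul_le_mul_left ?_ ht
    simpa [← mul_assoc, ← sq] using sq_one_add_inner_mul_card_le hunit hbal hdeg2 hx hz hxz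

end

theorem two_design_inner_upper_bound_general (n N : ℕ)
    (C : Finset (EuclideanSpace ℝ (Fin n)))
    (hcard : C.card = N) (hunit : ∀ x ∈ C, ‖x‖ = 1)
    (hbal : ∑ x ∈ C, x = 0)
    (hdeg2 : ∀ y : EuclideanSpace ℝ (Fin n), ‖y‖ = 1 →
      ∑ x ∈ C, (⟪x, y⟫ : ℝ) ^ 2 = (N : ℝ) / n)
    (x z : EuclideanSpace ℝ (Fin n)) (hx : x ∈ C) (hz : z ∈ C) (hxz : x ≠ z) :
    (⟪x, z⟫ : ℝ) ≤ ((N : ℝ) - 2) / n - 1 := by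
  have hN : (0 : ℝ) < N := by exact_mod_cast hcard ▸ card_pos.mpr ⟨x, hx⟩
  have h := one_add_inner_mul_card_le hunit hbal (sum_inner_sq_eq_mul_norm_sq hdeg2) hx hz hxz
  rw [hcard] at h
  have h' : (1 + ⟪x, z⟫) * N ≤ ((N - 2) / n) * N := h.trans_eq (by ring)
  linarith [le_of_mul_le_mul_right h' hN]

/-- Lemma 2.1(a): for a spherical 2-design of `N` points on `S^{n-1}` with `n+1 ≤ N ≤ 2n`,
any two distinct points `x, z` satisfy `⟪x,z⟫ ≤ (N−2)/n − 1`. -/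
theorem two_design_inner_upper_bound (n N : ℕ) (hn : 1 ≤ n)
    (hN1 : n + 1 ≤ N) (hN2 : N ≤ 2 * n)
    (C : Finset (EuclideanSpace ℝ (Fin n)))
    (hcard : C.card = N) (hunit : ∀ x ∈ C, ‖x‖ = 1)
    (hbal : ∑ x ∈ C, x = 0)
    (hdeg2 : ∀ y : EuclideanSpace ℝ (Fin n), ‖y‖ = 1 →
      ∑ x ∈ C, (⟪x, y⟫ : ℝ) ^ 2 = (N : ℝ) / n)
    (x z : EuclideanSpace ℝ (Fin n)) (hx : x ∈ C) (hz : z ∈ C) (hxz : x ≠ z) :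
    (⟪x, z⟫ : ℝ) ≤ ((N : ℝ) - 2) / n - 1 :=
  two_design_inner_upper_bound_general n N C hcard hunit hbal hdeg2 x z hx hz hxz
end

section
/- Let n ≥ 2, N ∈ [n+1, 2n], and h be a convex nonnegative function on [-1,1] with h convex and h'' ≥ 0 implying the chord lies above the graph. If C is a spherical 2-design on S^{n-1} with N points whose pairwise inner products all lie in [ℓ, u] where ℓ = 1 − N/n and u = (N−2)/n − 1, and ℓ < u, then E(C;h) ≤ N[(N−1)(u·h(ℓ) − ℓ·h(u)) + h(ℓ) − h(u)]/(u − ℓ). -/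
open Finset
open scoped RealInnerProductSpace Classical

/-!
Since `∑ x = 0` and `‖x‖ = 1`, each row `∑_{y ≠ x} ⟪x, y⟫` equals `-1`. By convexity `h` lies
below its chord through `(ℓ, h ℓ)` and `(u, h u)`, and summing that affine majorant over the
`N (N - 1)` ordered pairs gives exactly the bound.
-/

theorem ConvexOn.mul_le_chord {𝕜 : Type*} [Field 𝕜] [LinearOrder 𝕜] [IsStrictOrderedRing 𝕜]
    {s : Set 𝕜} {f : 𝕜 → 𝕜} (hf : ConvexOn 𝕜 s f) {a b t : 𝕜} (ha : a ∈ s) (hb : b ∈ s)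
    (hab : a < b) (ht : t ∈ Set.Icc a b) :
    (b - a) * f t ≤ (b - t) * f a + (t - a) * f b := by
  have hba : 0 < b - a := sub_pos.2 hab
  have key := hf.2 ha hb (div_nonneg (sub_nonneg.2 ht.2) hba.le)
    (div_nonneg (sub_nonneg.2 ht.1) hba.le) (by field)
  have hcomb : (b - t) / (b - a) * a + (t - a) / (b - a) * b = t := by field
  simp only [smul_eq_mul, hcomb] at key
  calc (b - a) * f t ≤ (b - a) * ((b - t) / (b - a) * f a + (t - a) / (b - a) * f b) :=
        mul_le_mul_of_nonneg_left key hba.le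
    _ = (b - t) * f a + (t - a) * f b := by field

theorem sum_inner_erase_eq_neg_one {E : Type*} [NormedAddCommGroup E] [InnerProductSpace ℝ E]
    [DecidableEq E] {C : Finset E} (hbal : ∑ x ∈ C, x = 0) {x : E} (hx : x ∈ C) (hxnorm : ‖x‖ = 1) :
    ∑ y ∈ C.erase x, ⟪x, y⟫ = -1 := by
  have hrow : ⟪x, x⟫ + ∑ y ∈ C.erase x, ⟪x, y⟫ = 0 := by
    rw [add_sum_erase C (fun y => ⟪x, y⟫) hx, ← inner_sum, hbal, inner_zero_right]
  rw [real_inner_self_eq_norm_sq, hxnorm] at hrow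
  linarith

theorem sum_sum_erase_le_of_le_affine {E : Type*} [NormedAddCommGroup E]
    [InnerProductSpace ℝ E] [DecidableEq E] {C : Finset E} (hbal : ∑ x ∈ C, x = 0)
    (hunit : ∀ x ∈ C, ‖x‖ = 1) {f : ℝ → ℝ} {α β : ℝ}
    (hf : ∀ x ∈ C, ∀ y ∈ C, x ≠ y → f ⟪x, y⟫ ≤ α + β * ⟪x, y⟫) :
    ∑ x ∈ C, ∑ y ∈ C.erase x, f ⟪x, y⟫ ≤ #C * ((#C - 1) * α - β) := by
  have hrow : ∀ x ∈ C, ∑ y ∈ C.erase x, f ⟪x, y⟫ ≤ (#C - 1) * α - β := fun x hx =>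
    calc ∑ y ∈ C.erase x, f ⟪x, y⟫ ≤ ∑ y ∈ C.erase x, (α + β * ⟪x, y⟫) :=
          sum_le_sum fun y hy => hf x hx y (mem_of_mem_erase hy) (ne_of_mem_erase hy).symm
      _ = (#C - 1) * α - β := by
          rw [sum_add_distrib, sum_const, ← mul_sum,
            sum_inner_erase_eq_neg_one hbal hx (hunit x hx), card_erase_of_mem hx, nsmul_eq_mul, Nat.cast_pred (card_pos.2 ⟨x, hx⟩)]
          ring
  calc ∑ x ∈ C, ∑ y ∈ C.erase x, f ⟪x, y⟫ ≤ ∑ _x ∈ C, ((#C - 1) * α - β) := sum_le_sum hrow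
    _ = #C * ((#C - 1) * α - β) := by rw [sum_const, nsmul_eq_mul]

theorem Icc_one_sub_div_subset_Icc_neg_one_one {n N : ℕ} (hN : N ≤ 2 * n) :
    Set.Icc (1 - (N : ℝ) / n) (((N : ℝ) - 2) / n - 1) ⊆ Set.Icc (-1) 1 := by
  have hNn : (N : ℝ) / n ≤ 2 := div_le_of_le_mul₀ n.cast_nonneg zero_le_two (by exact_mod_cast hN)
  have htwo : 0 ≤ (2 : ℝ) / n := by positivity
  refine Set.Icc_subset_Icc ?_ ?_
  · linarith
  · rw [sub_div]; linarith

theorem two_design_energy_upper_bound_general (n N : ℕ)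
    (hN2 : N ≤ 2 * n)
    (h : ℝ → ℝ) (hconv : ConvexOn ℝ (Set.Icc (-1 : ℝ) 1) h)
    (ℓ u : ℝ) (hℓ : ℓ = 1 - (N : ℝ) / n) (hu : u = ((N : ℝ) - 2) / n - 1) (hℓu : ℓ < u)
    (C : Finset (EuclideanSpace ℝ (Fin n)))
    (hcard : C.card = N) (hunit : ∀ x ∈ C, ‖x‖ = 1)
    (hbal : ∑ x ∈ C, x = 0)
    (hrange : ∀ x ∈ C, ∀ y ∈ C, x ≠ y → (⟪x, y⟫ : ℝ) ∈ Set.Icc ℓ u) :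
    ∑ x ∈ C, ∑ y ∈ C.erase x, h ⟪x, y⟫ ≤
      (N : ℝ) * (((N : ℝ) - 1) * (u * h ℓ - ℓ * h u) + h ℓ - h u) / (u - ℓ) := by
  have hsub : Set.Icc ℓ u ⊆ Set.Icc (-1) 1 := hℓ ▸ hu ▸ Icc_one_sub_div_subset_Icc_neg_one_one hN2
  have hconvIcc := hconv.subset hsub (convex_Icc ℓ u)
  have hul : 0 < u - ℓ := sub_pos.2 hℓu
  have hchord : ∀ x ∈ C, ∀ y ∈ C, x ≠ y → h ⟪x, y⟫ ≤
      (u * h ℓ - ℓ * h u) / (u - ℓ) + (h u - h ℓ) / (u - ℓ) * ⟪x, y⟫ := by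
    intro x hx y hy hxy
    have := hconvIcc.mul_le_chord (Set.left_mem_Icc.2 hℓu.le) (Set.right_mem_Icc.2 hℓu.le) hℓu
      (hrange x hx y hy hxy)
    rw [div_mul_eq_mul_div, ← add_div, le_div_iff₀ hul]
    linarith
  calc ∑ x ∈ C, ∑ y ∈ C.erase x, h ⟪x, y⟫
      ≤ #C * ((#C - 1) * ((u * h ℓ - ℓ * h u) / (u - ℓ)) - (h u - h ℓ) / (u - ℓ)) :=
        sum_sum_erase_le_of_le_affine hbal hunit hchord
    _ = _ := by rw [hcard]; field_simp; ring

/-- Theorem 5.1: upper bound for the `h`-energy of a spherical 2-design of `N` points on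
`S^{n-1}` (`n+1 ≤ N ≤ 2n`, `h` convex and nonnegative), whose pairwise inner products lie in
`[ℓ, u]` with `ℓ = 1 − N/n`, `u = (N−2)/n − 1` and `ℓ < u`. -/
theorem two_design_energy_upper_bound (n N : ℕ) (hn : 2 ≤ n)
    (hN1 : n + 1 ≤ N) (hN2 : N ≤ 2 * n)
    (h : ℝ → ℝ) (hconv : ConvexOn ℝ (Set.Icc (-1 : ℝ) 1) h)
    (hnonneg : ∀ t ∈ Set.Icc (-1 : ℝ) 1, 0 ≤ h t)
    (ℓ u : ℝ) (hℓ : ℓ = 1 - (N : ℝ) / n) (hu : u = ((N : ℝ) - 2) / n - 1) (hℓu : ℓ < u)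
    (C : Finset (EuclideanSpace ℝ (Fin n)))
    (hcard : C.card = N) (hunit : ∀ x ∈ C, ‖x‖ = 1)
    (hbal : ∑ x ∈ C, x = 0)
    (hdeg2 : ∀ y : EuclideanSpace ℝ (Fin n), ‖y‖ = 1 →
      ∑ x ∈ C, (⟪x, y⟫ : ℝ) ^ 2 = (N : ℝ) / n)
    (hrange : ∀ x ∈ C, ∀ y ∈ C, x ≠ y → (⟪x, y⟫ : ℝ) ∈ Set.Icc ℓ u) :
    ∑ x ∈ C, ∑ y ∈ C.erase x, h ⟪x, y⟫ ≤
      (N : ℝ) * (((N : ℝ) - 1) * (u * h ℓ - ℓ * h u) + h ℓ - h u) / (u - ℓ) :=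
  two_design_energy_upper_bound_general n N hN2 h hconv ℓ u hℓ hu hℓu C hcard hunit hbal hrange
end

section
/- Let C be a spherical 2-design with N points on S^{n-1}, where N ∈ [n+1, 2n], and let h be a function on [-1,1] that is bounded below on [ℓ,1) by the quadratic polynomial f interpolating h at ℓ = 1 − N/n with f(ℓ) = h(ℓ), f(0) = h(0), f'(0) = h'(0) (valid when h has nonnegative third derivative). Then E(C;h) ≥ N[h(0)·N(N−n−1) + n·h(1−N/n)]/(N−n). -/
/-!
The quadratic `f` is a lower bound for `h` at every inner product that occurs, so
`E(C;h) ≥ E(C;f)`. Since `f` has degree two, `E(C;f)` depends only on the first two moments of the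
inner products of `C`, which a 2-design fixes: from every point the other points have inner
products summing to `-1` and squared inner products summing to `N/n - 1`. Evaluating
`E(C;f)` with these moments and eliminating the coefficients of `f` through `f(0)` and
`f(1 - N/n)` gives the bound.
-/

open Finset
open scoped RealInnerProductSpace

section InnerProducts

variable {E : Type*} [SeminormedAddCommGroup E] [InnerProductSpace ℝ E] [DecidableEq E]
  {C : Finset E} {x : E}

lemma sum_erase_apply_inner (hx : x ∈ C) (hx1 : ‖x‖ = 1) (g : ℝ → ℝ) :
    ∑ y ∈ C.erase x, g ⟪x, y⟫ = ∑ y ∈ C, g ⟪x, y⟫ - g 1 := by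
  rw [← add_sum_erase C (fun y => g ⟪x, y⟫) hx, real_inner_self_eq_norm_sq, hx1, one_pow]
  ring

lemma sum_erase_inner_eq_neg_one (hbal : ∑ y ∈ C, y = 0) (hx : x ∈ C) (hx1 : ‖x‖ = 1) :
    ∑ y ∈ C.erase x, ⟪x, y⟫ = -1 := by
  have hsplit := sum_erase_apply_inner hx hx1 id
  simp only [id] at hsplit
  rw [hsplit, ← inner_sum, hbal, inner_zero_right, zero_sub]

lemma sum_erase_inner_sq_eq {a : ℝ} (hsq : ∑ y ∈ C, ⟪y, x⟫ ^ 2 = a) (hx : x ∈ C)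
    (hx1 : ‖x‖ = 1) : ∑ y ∈ C.erase x, ⟪x, y⟫ ^ 2 = a - 1 := by
  rw [sum_erase_apply_inner hx hx1 (· ^ 2)]
  simp only [← hsq, real_inner_comm x, one_pow]

lemma sum_sum_erase_quadratic {m : ℝ} (c0 c1 c2 : ℝ)
    (hfirst : ∀ x ∈ C, ∑ y ∈ C.erase x, ⟪x, y⟫ = -1)
    (hsecond : ∀ x ∈ C, ∑ y ∈ C.erase x, ⟪x, y⟫ ^ 2 = m) :
    ∑ x ∈ C, ∑ y ∈ C.erase x, (c2 * ⟪x, y⟫ ^ 2 + c1 * ⟪x, y⟫ + c0) =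
      #C * (c2 * m - c1 + c0 * (#C - 1)) := by
  have hrow : ∀ x ∈ C, ∑ y ∈ C.erase x, (c2 * ⟪x, y⟫ ^ 2 + c1 * ⟪x, y⟫ + c0) =
      c2 * m - c1 + c0 * (#C - 1) := by
    intro x hx
    have hcard : (#(C.erase x) : ℝ) = #C - 1 := by
      rw [← card_erase_add_one hx]; push_cast; ring
    simp only [sum_add_distrib, ← mul_sum, hfirst x hx, hsecond x hx, sum_const, hcard,
      nsmul_eq_mul]
    ring
  rw [sum_congr rfl hrow, sum_const, nsmul_eq_mul]

end InnerProducts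

lemma quadratic_energy_eq_interpolation_bound {n N : ℝ} (hn : n ≠ 0) (hNn : N ≠ n)
    (c0 c1 c2 : ℝ) :
    N * (c0 * N * (N - n - 1) + n * (c2 * (1 - N / n) ^ 2 + c1 * (1 - N / n) + c0)) / (N - n) =
      N * (c2 * (N / n - 1) - c1 + c0 * (N - 1)) := by
  have hNn' : N - n ≠ 0 := sub_ne_zero.mpr hNn
  field_simp
  ring

theorem two_design_energy_lower_bound_general (n N : ℕ) (hn : 2 ≤ n)
    (hN1 : n + 1 ≤ N)
    (h f : ℝ → ℝ) (c0 c1 c2 : ℝ)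
    (hfdef : f = fun t => c2 * t ^ 2 + c1 * t + c0)
    (ℓ : ℝ) (hℓ : ℓ = 1 - (N : ℝ) / n)
    (hfℓ : f ℓ = h ℓ) (hf0 : f 0 = h 0)
    (hdom : ∀ t ∈ Set.Ico ℓ (1 : ℝ), f t ≤ h t)
    (C : Finset (EuclideanSpace ℝ (Fin n)))
    (hcard : C.card = N) (hunit : ∀ x ∈ C, ‖x‖ = 1)
    (hbal : ∑ x ∈ C, x = 0)
    (hdeg2 : ∀ y : EuclideanSpace ℝ (Fin n), ‖y‖ = 1 →
      ∑ x ∈ C, (⟪x, y⟫ : ℝ) ^ 2 = (N : ℝ) / n)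
    (hrange : ∀ x ∈ C, ∀ y ∈ C, x ≠ y → (⟪x, y⟫ : ℝ) ∈ Set.Ico ℓ (1 : ℝ)) :
    (N : ℝ) * (h 0 * N * ((N : ℝ) - n - 1) + n * h (1 - (N : ℝ) / n)) / ((N : ℝ) - n) ≤
      ∑ x ∈ C, ∑ y ∈ C.erase x, h ⟪x, y⟫ := by
  subst hfdef hℓ
  have hn0 : (n : ℝ) ≠ 0 := Nat.cast_ne_zero.mpr (by omega)
  have hNn : (N : ℝ) ≠ n := Nat.cast_injective.ne (by omega)
  have hf_energy := sum_sum_erase_quadratic c0 c1 c2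
    (fun x hx => sum_erase_inner_eq_neg_one hbal hx (hunit x hx))
    (fun x hx => sum_erase_inner_sq_eq (hdeg2 x (hunit x hx)) hx (hunit x hx))
  rw [hcard] at hf_energy
  calc (N : ℝ) * (h 0 * N * ((N : ℝ) - n - 1) + n * h (1 - (N : ℝ) / n)) / ((N : ℝ) - n)
      = N * (c2 * (N / n - 1) - c1 + c0 * (N - 1)) := by
        rw [← hfℓ, ← hf0, ← quadratic_energy_eq_interpolation_bound hn0 hNn]
        simp
    _ = ∑ x ∈ C, ∑ y ∈ C.erase x, (c2 * ⟪x, y⟫ ^ 2 + c1 * ⟪x, y⟫ + c0) := hf_energy.symm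
    _ ≤ ∑ x ∈ C, ∑ y ∈ C.erase x, h ⟪x, y⟫ :=
        sum_le_sum fun x hx => sum_le_sum fun y hy =>
          hdom _ (hrange x hx y (mem_of_mem_erase hy) (ne_of_mem_erase hy).symm)

/-- Theorem 4.2: lower bound for the `h`-energy of a spherical 2-design of `N` points on
`S^{n-1}` with `n+1 ≤ N ≤ 2n`, where `h` is bounded below on `[ℓ,1)` (with `ℓ = 1 − N/n`) by
the quadratic polynomial `f` interpolating `h` at `ℓ` and touching it at `0`:
`f(ℓ) = h(ℓ)`, `f(0) = h(0)`, `f'(0) = h'(0)`. -/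
theorem two_design_energy_lower_bound (n N : ℕ) (hn : 2 ≤ n)
    (hN1 : n + 1 ≤ N) (hN2 : N ≤ 2 * n)
    (h f : ℝ → ℝ) (c0 c1 c2 : ℝ)
    (hfdef : f = fun t => c2 * t ^ 2 + c1 * t + c0)
    (ℓ : ℝ) (hℓ : ℓ = 1 - (N : ℝ) / n)
    (hfℓ : f ℓ = h ℓ) (hf0 : f 0 = h 0) (hf'0 : c1 = deriv h 0)
    (hdom : ∀ t ∈ Set.Ico ℓ (1 : ℝ), f t ≤ h t)
    (C : Finset (EuclideanSpace ℝ (Fin n)))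
    (hcard : C.card = N) (hunit : ∀ x ∈ C, ‖x‖ = 1)
    (hbal : ∑ x ∈ C, x = 0)
    (hdeg2 : ∀ y : EuclideanSpace ℝ (Fin n), ‖y‖ = 1 →
      ∑ x ∈ C, (⟪x, y⟫ : ℝ) ^ 2 = (N : ℝ) / n)
    (hrange : ∀ x ∈ C, ∀ y ∈ C, x ≠ y → (⟪x, y⟫ : ℝ) ∈ Set.Ico ℓ (1 : ℝ)) :
    (N : ℝ) * (h 0 * N * ((N : ℝ) - n - 1) + n * h (1 - (N : ℝ) / n)) / ((N : ℝ) - n) ≤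
      ∑ x ∈ C, ∑ y ∈ C.erase x, h ⟪x, y⟫ :=
  two_design_energy_lower_bound_general n N hn hN1 h f c0 c1 c2 hfdef ℓ hℓ hfℓ hf0 hdom C hcard
    hunit hbal hdeg2 hrange
end

section
/- If N = n+1 or N = n+2, then the lower bound N[h(0)·N(N−n−1) + n·h(1−N/n)]/(N−n) and the upper bound N[(N−1)(u·h(ℓ) − ℓ·h(u)) + h(ℓ) − h(u)]/(u−ℓ) with ℓ = 1−N/n, u = (N−2)/n − 1 coincide for every function h. -/
/-!
For `N = n + 1` the factor `N - n - 1` kills the `h 0` term of the lower bound, leaving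
`N (N - 1) h(ℓ)` with `ℓ = -1/n`. For `N = n + 2` one has `ℓ = -2/n` and `u = 0`, and both
bounds reduce to `N (n h(-2/n) + (n + 2) h(0)) / 2`.
-/

/-- The lower bound of Theorem 4.2 for the energy of a spherical 2-design of `N` points on
`S^{n-1}`, with `ℓ = 1 - N/n`. -/
noncomputable def twoDesignLowerBound (n N ℓ : ℝ) (h : ℝ → ℝ) : ℝ :=
  N * (h 0 * N * (N - n - 1) + n * h ℓ) / (N - n)

/-- The upper bound of Theorem 5.1 for the energy of a spherical 2-design of `N` points whose
inner products lie in `[ℓ, u]`. -/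
noncomputable def twoDesignUpperBound (N ℓ u : ℝ) (h : ℝ → ℝ) : ℝ :=
  N * ((N - 1) * (u * h ℓ - ℓ * h u) + h ℓ - h u) / (u - ℓ)

theorem twoDesignLowerBound_of_eq_add_one {n N : ℝ} (hn : n ≠ 0) (hN : N = n + 1)
    (h : ℝ → ℝ) : twoDesignLowerBound n N (1 - N / n) h = N * (N - 1) * h (-1 / n) := by
  have hℓ : 1 - N / n = -1 / n := by rw [hN]; field_simp; ring
  rw [twoDesignLowerBound, hℓ, hN]
  field_simp
  ring

theorem twoDesignLowerBound_eq_upperBound_of_eq_add_two {n N : ℝ} (hn : n ≠ 0)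
    (hN : N = n + 2) (h : ℝ → ℝ) :
    twoDesignLowerBound n N (1 - N / n) h =
      twoDesignUpperBound N (1 - N / n) ((N - 2) / n - 1) h := by
  have hℓ : 1 - N / n = -2 / n := by rw [hN]; field_simp; ring
  have hu : (N - 2) / n - 1 = 0 := by rw [hN]; field_simp; ring
  rw [twoDesignLowerBound, twoDesignUpperBound, hℓ, hu, hN]
  field_simp
  ring

/-- Example 5.3: for `N = n+1` and `N = n+2` the lower bound of Theorem 4.2 coincides with the
upper bound of Theorem 5.1 (with `ℓ = 1 − N/n`, `u = (N−2)/n − 1`; for `N = n+1` the bounds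
degenerate to the common value `N(N−1)h(−1/n)`). -/
theorem two_design_bounds_coincide (n N : ℕ) (hn : 1 ≤ n) (h : ℝ → ℝ)
    (hN : N = n + 1 ∨ N = n + 2)
    (ℓ u : ℝ) (hℓ : ℓ = 1 - (N : ℝ) / n) (hu : u = ((N : ℝ) - 2) / n - 1) :
    (N : ℝ) * (h 0 * N * ((N : ℝ) - n - 1) + n * h ℓ) / ((N : ℝ) - n) =
      if N = n + 1 then (N : ℝ) * ((N : ℝ) - 1) * h (-1 / n)
      else (N : ℝ) * (((N : ℝ) - 1) * (u * h ℓ - ℓ * h u) + h ℓ - h u) / (u - ℓ) := by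
  have hn0 : (n : ℝ) ≠ 0 := Nat.cast_ne_zero.mpr (by omega)
  subst hℓ hu
  rcases hN with rfl | rfl
  · rw [if_pos rfl]
    exact twoDesignLowerBound_of_eq_add_one hn0 (by push_cast; ring) h
  · rw [if_neg (by omega)]
    exact twoDesignLowerBound_eq_upperBound_of_eq_add_two hn0 (by push_cast; ring) h
end

section
/- For all sufficiently large s, the Riesz s-energy of the Mimura design {k,k} is strictly larger than that of the configuration {2,2k−2}: E_s({k,k}) > E_s({2,2k−2}) for s large, where E_s({k,k}) = (k²/2^{s/2})(1 + (k−1)/k·((k−1)/k)^{s/2}) and E_s({2,2k−2}) = (2(2k−2)/2^{s/2})(1 + 1/(2(2k−2)2^{s/2}) + ((2k−3)/4)((2k−3)/(2k−2))^{s/2}), assuming k ≥ 3. -/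
/-!
After factoring out `2^{-s/2}`, the remaining terms of both energies decay exponentially in `s`,
so for large `s` the energies compare as their leading coefficients `4k - 4` and `k²`, and
`k² - (4k - 4) = (k - 2)² > 0`.
-/

open Filter Real Topology

lemma tendsto_rpow_half_atTop_of_lt_one {a : ℝ} (ha₀ : 0 ≤ a) (ha₁ : a < 1) :
    Tendsto (fun s : ℝ => a ^ (s / 2)) atTop (𝓝 0) :=
  (tendsto_rpow_atTop_of_base_lt_one a (by linarith) ha₁).comp
    (tendsto_id.atTop_div_const two_pos)

lemma tendsto_rpow_half_atTop_of_one_lt {b : ℝ} (hb : 1 < b) :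
    Tendsto (fun s : ℝ => b ^ (s / 2)) atTop atTop :=
  (tendsto_rpow_atTop_of_base_gt_one b hb).comp (tendsto_id.atTop_div_const two_pos)

/-- Example 5.4: for `k ≥ 3` and all sufficiently large `s`, the Riesz `s`-energy of the Mimura
design `{k,k}` is strictly larger than that of the competing configuration `{2, 2k−2}`. -/
theorem mimura_not_universally_optimal (k : ℕ) (hk : 3 ≤ k) :
    ∃ s₀ : ℝ, ∀ s : ℝ, s₀ ≤ s →
      (2 * (2 * (k : ℝ) - 2)) / (2 : ℝ) ^ (s / 2) *
          (1 + 1 / (2 * (2 * (k : ℝ) - 2) * (2 : ℝ) ^ (s / 2)) +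
            ((2 * (k : ℝ) - 3) / 4) * ((2 * (k : ℝ) - 3) / (2 * (k : ℝ) - 2)) ^ (s / 2)) <
        (k : ℝ) ^ 2 / (2 : ℝ) ^ (s / 2) *
          (1 + (((k : ℝ) - 1) / k) * (((k : ℝ) - 1) / k) ^ (s / 2)) := by
  have hK : (3 : ℝ) ≤ k := by exact_mod_cast hk
  have hX := tendsto_rpow_half_atTop_of_one_lt one_lt_two
  have hA := tendsto_rpow_half_atTop_of_lt_one (a := (2 * (k : ℝ) - 3) / (2 * k - 2))
    (div_nonneg (by linarith) (by linarith)) ((div_lt_one (by linarith)).2 (by linarith))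
  have hC := tendsto_rpow_half_atTop_of_lt_one (a := ((k : ℝ) - 1) / k)
    (div_nonneg (by linarith) (by linarith)) ((div_lt_one (by linarith)).2 (by linarith))
  have hone : Tendsto (fun _ : ℝ => (1 : ℝ)) atTop (𝓝 1) := tendsto_const_nhds
  have hlim_split := ((hone.add (hone.div_atTop
    (hX.const_mul_atTop (by linarith : (0 : ℝ) < 2 * (2 * k - 2))))).add
    (hA.const_mul ((2 * (k : ℝ) - 3) / 4))).const_mul (2 * (2 * (k : ℝ) - 2))
  have hlim_mimura := (hone.add (hC.const_mul (((k : ℝ) - 1) / k))).const_mul ((k : ℝ) ^ 2)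
  simp only [mul_zero, add_zero, mul_one] at hlim_split hlim_mimura
  have hgap : 2 * (2 * (k : ℝ) - 2) < k ^ 2 := by nlinarith
  obtain ⟨s₀, hs₀⟩ := eventually_atTop.1 (hlim_split.eventually_lt hlim_mimura hgap)
  refine ⟨s₀, fun s hs => ?_⟩
  simpa only [div_mul_eq_mul_div] using
    div_lt_div_of_pos_right (hs₀ s hs) (rpow_pos_of_pos two_pos (s / 2))
end
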